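/- arXiv:2507.02807 — 4 statements merged into one kernel-verified Lean document; each statement's English description precedes it below -/
import Mathlib

section
/- Let 0 < Ã ≤ B̃ < 1, ν ≥ 0, and let n ≥ 1 be a natural number. Let h, h' : Fin n → ℝ satisfy Ã ≤ h t ≤ B̃, Ã ≤ h' t ≤ B̃ and |h t − h' t| ≤ ν for every t. Then | log(1 − ∏_{t} (1 − h t)) − log(1 − ∏_{t} (1 − h' t)) | ≤ n·ν / (1 − (1 − Ã)^n). -/
/-!
Both arguments of the logarithm are `1 - ∏ (1 - h t)` with every factor in `[0, 1 - A]`, so they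
are at least `c = 1 - (1 - A)^n > 0`; on `[c, ∞)` the logarithm is `1/c`-Lipschitz. A product of
factors of norm at most one is `1`-Lipschitz in each factor, so the two products differ by at most
`∑ |h t - h' t| ≤ n ν`.
-/

open Finset

theorem Finset.norm_prod_sub_prod_le_sum {ι R : Type*} [NormedCommRing R] [NormOneClass R]
    (s : Finset ι) {f g : ι → R} (hf : ∀ i ∈ s, ‖f i‖ ≤ 1) (hg : ∀ i ∈ s, ‖g i‖ ≤ 1) :
    ‖∏ i ∈ s, f i - ∏ i ∈ s, g i‖ ≤ ∑ i ∈ s, ‖f i - g i‖ := by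
  classical
  induction s using Finset.induction_on with
  | empty => simp
  | insert a s ha ih =>
    simp only [forall_mem_insert] at hf hg
    have hfs : ‖∏ i ∈ s, f i‖ ≤ 1 :=
      (Finset.norm_prod_le s f).trans (prod_le_one (fun _ _ => norm_nonneg _) hf.2)
    rw [prod_insert ha, prod_insert ha, sum_insert ha,
      show f a * ∏ i ∈ s, f i - g a * ∏ i ∈ s, g i
        = (f a - g a) * ∏ i ∈ s, f i + g a * (∏ i ∈ s, f i - ∏ i ∈ s, g i) by ring]
    calc ‖(f a - g a) * ∏ i ∈ s, f i + g a * (∏ i ∈ s, f i - ∏ i ∈ s, g i)‖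
        ≤ ‖f a - g a‖ * ‖∏ i ∈ s, f i‖ + ‖g a‖ * ‖∏ i ∈ s, f i - ∏ i ∈ s, g i‖ :=
          (norm_add_le _ _).trans (add_le_add (norm_mul_le _ _) (norm_mul_le _ _))
      _ ≤ ‖f a - g a‖ * 1 + 1 * ∑ i ∈ s, ‖f i - g i‖ := by
          gcongr
          exacts [hg.1, ih hf.2 hg.2]
      _ = ‖f a - g a‖ + ∑ i ∈ s, ‖f i - g i‖ := by ring

theorem Real.abs_log_sub_log_le_div {c x y : ℝ} (hc : 0 < c) (hx : c ≤ x) (hy : c ≤ y) :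
    |Real.log x - Real.log y| ≤ |x - y| / c := by
  wlog hyx : y ≤ x generalizing x y
  · rw [abs_sub_comm, abs_sub_comm x]
    exact this hy hx (le_of_not_ge hyx)
  have hy0 : 0 < y := hc.trans_le hy
  rw [abs_of_nonneg (sub_nonneg.2 (Real.log_le_log hy0 hyx)), abs_of_nonneg (sub_nonneg.2 hyx)]
  calc Real.log x - Real.log y = Real.log (x / y) := (Real.log_div (hy0.trans_le hyx).ne' hy0.ne').symm
    _ ≤ x / y - 1 := Real.log_le_sub_one_of_pos (div_pos (hy0.trans_le hyx) hy0)
    _ = (x - y) / y := by field_simp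
    _ ≤ (x - y) / c := div_le_div_of_nonneg_left (sub_nonneg.2 hyx) hc hy

theorem one_sub_pow_le_one_sub_prod_one_sub {n : ℕ} {A B : ℝ} (hB : B < 1) {g : Fin n → ℝ}
    (hg : ∀ t, A ≤ g t ∧ g t ≤ B) :
    1 - (1 - A) ^ n ≤ 1 - ∏ t, (1 - g t) := by
  have hprod : ∏ t, (1 - g t) ≤ ∏ _t : Fin n, (1 - A) :=
    prod_le_prod (fun t _ => by linarith [hg t]) (fun t _ => by linarith [hg t])
  simp only [prod_const, card_univ, Fintype.card_fin] at hprod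
  linarith

theorem log_one_sub_prod_diff_le_general (A B ν : ℝ)
    (hA : 0 < A) (hB : B < 1)
    (n : ℕ) (hn : 1 ≤ n) (h h' : Fin n → ℝ)
    (hh : ∀ t, A ≤ h t ∧ h t ≤ B) (hh' : ∀ t, A ≤ h' t ∧ h' t ≤ B)
    (hd : ∀ t, |h t - h' t| ≤ ν) :
    |Real.log (1 - ∏ t, (1 - h t)) - Real.log (1 - ∏ t, (1 - h' t))| ≤
      n * ν / (1 - (1 - A) ^ n) := by
  have hc : 0 < 1 - (1 - A) ^ n :=
    sub_pos.2 (pow_lt_one₀ (by linarith [hh ⟨0, hn⟩]) (by linarith) (by omega))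
  have hfactor : ∀ g : Fin n → ℝ, (∀ t, A ≤ g t ∧ g t ≤ B) → ∀ t ∈ univ, ‖1 - g t‖ ≤ 1 :=
    fun g hg t _ => by rw [Real.norm_eq_abs, abs_le]; constructor <;> linarith [hg t]
  have hprod : |∏ t, (1 - h t) - ∏ t, (1 - h' t)| ≤ n * ν :=
    calc |∏ t, (1 - h t) - ∏ t, (1 - h' t)|
        ≤ ∑ t, ‖(1 - h t) - (1 - h' t)‖ :=
          univ.norm_prod_sub_prod_le_sum (hfactor h hh) (hfactor h' hh')
      _ ≤ ∑ _t : Fin n, ν := sum_le_sum fun t _ => by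
          rw [Real.norm_eq_abs, sub_sub_sub_cancel_left, abs_sub_comm]; exact hd t
      _ = n * ν := by simp
  calc |Real.log (1 - ∏ t, (1 - h t)) - Real.log (1 - ∏ t, (1 - h' t))|
      ≤ |(1 - ∏ t, (1 - h t)) - (1 - ∏ t, (1 - h' t))| / (1 - (1 - A) ^ n) :=
        Real.abs_log_sub_log_le_div hc (one_sub_pow_le_one_sub_prod_one_sub hB hh)
          (one_sub_pow_le_one_sub_prod_one_sub hB hh')
    _ ≤ n * ν / (1 - (1 - A) ^ n) := by
        rw [sub_sub_sub_cancel_left, abs_sub_comm]; gcongr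

/-- Third-term estimate in the paper's Lemma `Proposition2_X_10`:
for hazard rates in `[A, B] ⊂ (0,1)` differing by at most `ν`,
`|log(1 - ∏ (1 - h t)) - log(1 - ∏ (1 - h' t))| ≤ n ν / (1 - (1 - A)^n)`. -/
theorem log_one_sub_prod_diff_le (A B ν : ℝ)
    (hA : 0 < A) (hAB : A ≤ B) (hB : B < 1) (hν : 0 ≤ ν)
    (n : ℕ) (hn : 1 ≤ n) (h h' : Fin n → ℝ)
    (hh : ∀ t, A ≤ h t ∧ h t ≤ B) (hh' : ∀ t, A ≤ h' t ∧ h' t ≤ B)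
    (hd : ∀ t, |h t - h' t| ≤ ν) :
    |Real.log (1 - ∏ t, (1 - h t)) - Real.log (1 - ∏ t, (1 - h' t))| ≤
      n * ν / (1 - (1 - A) ^ n) :=
  log_one_sub_prod_diff_le_general A B ν hA hB n hn h h' hh hh' hd
end

section
/- Let τ ≥ 2 be a natural number, let 0 < Ã ≤ B̃ < 1, let ν ≥ 0, let t₀ ∈ {1,…,τ}, and let δ ∈ {0,1}. Let h, h' : {1,…,τ} → ℝ satisfy Ã ≤ h t ≤ B̃, Ã ≤ h' t ≤ B̃ and |h t − h' t| ≤ ν for every t. Define the discrete-time DRSA loss L(h) := −δ·( log(h t₀) + Σ_{t=1}^{t₀−1} log(1 − h t) ) − δ·log( 1 − ∏_{t=1}^{τ−1} (1 − h t) ) − (1 − δ)·Σ_{t=1}^{t₀−1} log(1 − h t). Then L(h') − L(h) ≤ ν/Ã + 2·τ·ν/(1 − B̃) + (τ − 1)·ν/(1 − (1 − Ã)^{τ−1}). -/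
/-!
In `L h' - L h` the two sums `∑_{t < t₀} log (1 - h t)` combine with total weight `1`,
leaving three differences of logarithms. Each is bounded through `log a - log b ≤ (a - b) / b`:
the hazard rates are at least `A`, the factors `1 - h t` at least `1 - B`, and
`1 - ∏_{t < τ} (1 - h t)` at least `1 - (1 - A) ^ (τ - 1)`, while a product of `τ - 1` factors
in `[0, 1]` moves by at most `(τ - 1) ν` when each factor moves by at most `ν`.
-/

open Finset Real

lemma Real.log_sub_log_le_abs_sub_div {m a b : ℝ} (hm : 0 < m) (ha : m ≤ a) (hb : m ≤ b) :
    log a - log b ≤ |a - b| / m := by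
  have ha₀ : 0 < a := hm.trans_le ha
  have hb₀ : 0 < b := hm.trans_le hb
  calc log a - log b = log (a / b) := (log_div ha₀.ne' hb₀.ne').symm
    _ ≤ a / b - 1 := log_le_sub_one_of_pos (by positivity)
    _ = (a - b) / b := by field_simp
    _ ≤ |a - b| / m := div_le_div₀ (abs_nonneg _) (le_abs_self _) hm hb

section

variable {ι : Type*} {s : Finset ι} {f g : ι → ℝ} {ν : ℝ}

lemma Finset.sum_log_sub_sum_log_le {m : ℝ} (hm : 0 < m) (hf : ∀ i ∈ s, m ≤ f i)
    (hg : ∀ i ∈ s, m ≤ g i) (hfg : ∀ i ∈ s, |f i - g i| ≤ ν) :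
    ∑ i ∈ s, log (f i) - ∑ i ∈ s, log (g i) ≤ #s * ν / m := by
  rw [← sum_sub_distrib, mul_div_assoc, ← nsmul_eq_mul]
  refine sum_le_card_nsmul _ _ _ fun i hi ↦ ?_
  exact (log_sub_log_le_abs_sub_div hm (hf i hi) (hg i hi)).trans
    (div_le_div_of_nonneg_right (hfg i hi) hm.le)

lemma Finset.abs_prod_sub_prod_le_card_mul [DecidableEq ι] (hf : ∀ i ∈ s, |f i| ≤ 1)
    (hg : ∀ i ∈ s, |g i| ≤ 1) (hfg : ∀ i ∈ s, |f i - g i| ≤ ν) :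
    |∏ i ∈ s, f i - ∏ i ∈ s, g i| ≤ #s * ν := by
  induction s using Finset.induction_on with
  | empty => simp
  | insert a s ha ih =>
    simp only [forall_mem_insert] at hf hg hfg
    have hprod : |∏ i ∈ s, f i| ≤ 1 := by
      rw [abs_prod]; exact prod_le_one (fun _ _ ↦ abs_nonneg _) hf.2
    rw [prod_insert ha, prod_insert ha, card_insert_of_notMem ha, Nat.cast_succ]
    calc |f a * ∏ i ∈ s, f i - g a * ∏ i ∈ s, g i|
        = |(f a - g a) * ∏ i ∈ s, f i + g a * (∏ i ∈ s, f i - ∏ i ∈ s, g i)| := by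
          congr 1; ring
      _ ≤ |f a - g a| * |∏ i ∈ s, f i| + |g a| * |∏ i ∈ s, f i - ∏ i ∈ s, g i| := by
        rw [← abs_mul, ← abs_mul]; exact abs_add_le _ _
      _ ≤ ν * 1 + 1 * (#s * ν) := by
        gcongr
        · exact (abs_nonneg _).trans hfg.1
        · exact hfg.1
        · exact hg.1
        · exact ih hf.2 hg.2 hfg.2
      _ = (#s + 1) * ν := by ring

lemma Finset.log_one_sub_prod_sub_le {c : ℝ} (hs : s.Nonempty) (hc : c < 1)
    (hf : ∀ i ∈ s, f i ∈ Set.Icc 0 c) (hg : ∀ i ∈ s, g i ∈ Set.Icc 0 c)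
    (hfg : ∀ i ∈ s, |f i - g i| ≤ ν) :
    log (1 - ∏ i ∈ s, f i) - log (1 - ∏ i ∈ s, g i) ≤ #s * ν / (1 - c ^ #s) := by
  classical
  obtain ⟨j, hj⟩ := hs
  have hc₀ : 0 ≤ c := (hf j hj).1.trans (hf j hj).2
  have hgap : 0 < 1 - c ^ #s := sub_pos.2 (pow_lt_one₀ hc₀ hc (card_ne_zero_of_mem hj))
  have prod_le_pow {p : ι → ℝ} (hp : ∀ i ∈ s, p i ∈ Set.Icc 0 c) :
      ∏ i ∈ s, p i ≤ c ^ #s := by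
    rw [← prod_const]
    exact prod_le_prod (fun i hi ↦ (hp i hi).1) (fun i hi ↦ (hp i hi).2)
  have abs_le_one_of_Icc {p : ι → ℝ} (hp : ∀ i ∈ s, p i ∈ Set.Icc 0 c) (i : ι)
      (hi : i ∈ s) : |p i| ≤ 1 := by
    rw [abs_of_nonneg (hp i hi).1]; exact (hp i hi).2.trans hc.le
  calc log (1 - ∏ i ∈ s, f i) - log (1 - ∏ i ∈ s, g i)
      ≤ |(1 - ∏ i ∈ s, f i) - (1 - ∏ i ∈ s, g i)| / (1 - c ^ #s) :=
        log_sub_log_le_abs_sub_div hgap (by linarith [prod_le_pow hf])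
          (by linarith [prod_le_pow hg])
    _ ≤ #s * ν / (1 - c ^ #s) := by
      rw [sub_sub_sub_cancel_left, abs_sub_comm]
      gcongr
      exact abs_prod_sub_prod_le_card_mul (abs_le_one_of_Icc hf) (abs_le_one_of_Icc hg) hfg

end

theorem drsa_loss_diff_le_general (τ : ℕ) (hτ : 2 ≤ τ) (A B ν : ℝ)
    (hA : 0 < A) (hB : B < 1)
    (t₀ : ℕ) (ht₀ : t₀ ∈ Finset.Icc 1 τ) (δ : ℝ) (hδ : δ = 0 ∨ δ = 1)
    (h h' : ℕ → ℝ)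
    (hh : ∀ t ∈ Finset.Icc 1 τ, A ≤ h t ∧ h t ≤ B)
    (hh' : ∀ t ∈ Finset.Icc 1 τ, A ≤ h' t ∧ h' t ≤ B)
    (hd : ∀ t ∈ Finset.Icc 1 τ, |h t - h' t| ≤ ν)
    (L : (ℕ → ℝ) → ℝ)
    (hL : ∀ g : ℕ → ℝ, L g =
      -δ * (Real.log (g t₀) + ∑ t ∈ Finset.Ico 1 t₀, Real.log (1 - g t))
      - δ * Real.log (1 - ∏ t ∈ Finset.Ico 1 τ, (1 - g t))
      - (1 - δ) * ∑ t ∈ Finset.Ico 1 t₀, Real.log (1 - g t)) :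
    L h' - L h ≤ ν / A + 2 * τ * ν / (1 - B)
      + ((τ : ℝ) - 1) * ν / (1 - (1 - A) ^ (τ - 1)) := by
  obtain ⟨ht₀₁, ht₀τ⟩ := mem_Icc.1 ht₀
  have hν : 0 ≤ ν := (abs_nonneg _).trans (hd t₀ ht₀)
  have hsub : Ico 1 t₀ ⊆ Ico 1 τ := Ico_subset_Ico_right ht₀τ
  have hsurv (g : ℕ → ℝ) (hg : ∀ t ∈ Icc 1 τ, A ≤ g t ∧ g t ≤ B) (t : ℕ) (ht : t ∈ Ico 1 τ) :
      1 - B ≤ 1 - g t ∧ 1 - g t ∈ Set.Icc 0 (1 - A) := by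
    obtain ⟨hAg, hgB⟩ := hg t (Ico_subset_Icc_self ht)
    exact ⟨by linarith, by linarith, by linarith⟩
  have hd₁ (t : ℕ) (ht : t ∈ Ico 1 τ) : |(1 - h t) - (1 - h' t)| ≤ ν := by
    rw [sub_sub_sub_cancel_left, abs_sub_comm]; exact hd t (Ico_subset_Icc_self ht)
  have hlog : log (h t₀) - log (h' t₀) ≤ ν / A :=
    (log_sub_log_le_abs_sub_div hA (hh t₀ ht₀).1 (hh' t₀ ht₀).1).trans
      (by gcongr; exact hd t₀ ht₀)
  have hsum : ∑ t ∈ Ico 1 t₀, log (1 - h t) - ∑ t ∈ Ico 1 t₀, log (1 - h' t)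
      ≤ 2 * τ * ν / (1 - B) := by
    have hcard : (#(Ico 1 t₀) : ℝ) ≤ 2 * τ := by rw [Nat.card_Ico]; norm_cast; omega
    refine (sum_log_sub_sum_log_le (sub_pos.2 hB) (fun t ht ↦ (hsurv h hh t (hsub ht)).1)
      (fun t ht ↦ (hsurv h' hh' t (hsub ht)).1) (fun t ht ↦ hd₁ t (hsub ht))).trans ?_
    gcongr
  have hprod := log_one_sub_prod_sub_le (nonempty_Ico.2 (by omega : 1 < τ)) (by linarith)
    (fun t ht ↦ (hsurv h hh t ht).2) (fun t ht ↦ (hsurv h' hh' t ht).2) hd₁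
  rw [Nat.card_Ico, Nat.cast_pred (by omega)] at hprod
  have hprod_nonneg : 0 ≤ ((τ : ℝ) - 1) * ν / (1 - (1 - A) ^ (τ - 1)) := by
    have hτ₁ : (1 : ℝ) ≤ τ := by norm_cast; omega
    have hpow : (1 - A) ^ (τ - 1) ≤ 1 :=
      pow_le_one₀ (by linarith [hh t₀ ht₀]) (by linarith)
    exact div_nonneg (mul_nonneg (sub_nonneg.2 hτ₁) hν) (sub_nonneg.2 hpow)
  rw [hL, hL]
  rcases hδ with rfl | rfl
  · linarith [div_nonneg hν hA.le]
  · linarith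

/-- Pointwise form of the paper's Lemma `Proposition2_X_10`: the DRSA loss changes by at
most `ν/A + 2τν/(1 - B) + (τ - 1)ν/(1 - (1 - A)^(τ-1))` when every hazard rate in
`[A, B] ⊂ (0,1)` is perturbed by at most `ν`. -/
theorem drsa_loss_diff_le (τ : ℕ) (hτ : 2 ≤ τ) (A B ν : ℝ)
    (hA : 0 < A) (hAB : A ≤ B) (hB : B < 1) (hν : 0 ≤ ν)
    (t₀ : ℕ) (ht₀ : t₀ ∈ Finset.Icc 1 τ) (δ : ℝ) (hδ : δ = 0 ∨ δ = 1)
    (h h' : ℕ → ℝ)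
    (hh : ∀ t ∈ Finset.Icc 1 τ, A ≤ h t ∧ h t ≤ B)
    (hh' : ∀ t ∈ Finset.Icc 1 τ, A ≤ h' t ∧ h' t ≤ B)
    (hd : ∀ t ∈ Finset.Icc 1 τ, |h t - h' t| ≤ ν)
    (L : (ℕ → ℝ) → ℝ)
    (hL : ∀ g : ℕ → ℝ, L g =
      -δ * (Real.log (g t₀) + ∑ t ∈ Finset.Ico 1 t₀, Real.log (1 - g t))
      - δ * Real.log (1 - ∏ t ∈ Finset.Ico 1 τ, (1 - g t))
      - (1 - δ) * ∑ t ∈ Finset.Ico 1 t₀, Real.log (1 - g t)) :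
    L h' - L h ≤ ν / A + 2 * τ * ν / (1 - B)
      + ((τ : ℝ) - 1) * ν / (1 - (1 - A) ^ (τ - 1)) :=
  drsa_loss_diff_le_general τ hτ A B ν hA hB t₀ ht₀ δ hδ h h' hh hh' hd L hL
end

section
/- Let Θ be a nonempty type, m ≥ 1, L, L̂ : Θ → (Fin m → ℝ) → ℝ, and let ζ ≥ 0. Let μ*, μ̂* : Fin m → ℝ be nonnegative vectors and θ_A, θ̂†, θ†, θ_B ∈ Θ satisfy: (i) L(θ_A, μ*) ≤ L(θ, μ*) for all θ; (ii) L̂(θ̂†, μ*) ≤ L̂(θ, μ*) for all θ; (iii) L(θ†, μ̂*) ≤ L(θ, μ̂*) for all θ; (iv) L̂(θ_B, μ̂*) ≤ L̂(θ, μ̂*) for all θ; (v) L(θ_A, μ*) ≥ L(θ†, μ̂*) and L̂(θ_B, μ̂*) ≥ L̂(θ̂†, μ*); and (vi) |L(θ, μ*) − L̂(θ, μ*)| ≤ (1 + Σ_i μ* i)·ζ and |L(θ, μ̂*) − L̂(θ, μ̂*)| ≤ (1 + Σ_i μ̂* i)·ζ for every θ. Set D := L(θ_A, μ*), D̂ :=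 L̂(θ_B, μ̂*), and κ := max(Σ_i μ* i, Σ_i μ̂* i). Then |D − D̂| ≤ (1 + κ)·ζ. -/
/-!
Each side of the gap is bounded by passing through the other problem's inner minimizer:
`D = L(θ_A, μ*) ≤ L(θ̂†, μ*) ≤ L̂(θ̂†, μ*) + (1 + ‖μ*‖₁)ζ ≤ D̂ + (1 + ‖μ*‖₁)ζ`, and symmetrically
`D̂ ≤ L̂(θ†, μ̂*) ≤ L(θ†, μ̂*) + (1 + ‖μ̂*‖₁)ζ ≤ D + (1 + ‖μ̂*‖₁)ζ`.
-/

theorem sub_le_of_le_of_abs_sub_le_of_le {a b c d ε : ℝ} (hab : a ≤ b) (hbc : |b - c| ≤ ε)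
    (hcd : c ≤ d) : a - d ≤ ε := by
  linarith [(abs_le.mp hbc).2]

theorem dual_gap_le_kappa_zeta_general {Θ : Type*} (m : ℕ)
    (L Lhat : Θ → (Fin m → ℝ) → ℝ) (ζ : ℝ) (hζ : 0 ≤ ζ)
    (μstar μhat : Fin m → ℝ)
    (θA θhatdag θdag θB : Θ)
    (h1 : ∀ θ, L θA μstar ≤ L θ μstar)
    (h4 : ∀ θ, Lhat θB μhat ≤ Lhat θ μhat)
    (h5 : L θdag μhat ≤ L θA μstar)
    (h6 : Lhat θhatdag μstar ≤ Lhat θB μhat)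
    (h7 : ∀ θ, |L θ μstar - Lhat θ μstar| ≤ (1 + ∑ i, μstar i) * ζ)
    (h8 : ∀ θ, |L θ μhat - Lhat θ μhat| ≤ (1 + ∑ i, μhat i) * ζ) :
    |L θA μstar - Lhat θB μhat| ≤ (1 + max (∑ i, μstar i) (∑ i, μhat i)) * ζ := by
  have hstar : L θA μstar - Lhat θB μhat ≤ (1 + ∑ i, μstar i) * ζ :=
    sub_le_of_le_of_abs_sub_le_of_le (h1 θhatdag) (h7 θhatdag) h6
  have hhat : Lhat θB μhat - L θA μstar ≤ (1 + ∑ i, μhat i) * ζ :=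
    sub_le_of_le_of_abs_sub_le_of_le (h4 θdag) (abs_sub_comm (L θdag μhat) _ ▸ h8 θdag) h5
  rw [abs_sub_le_iff]
  constructor
  · exact hstar.trans (by gcongr; exact le_max_left _ _)
  · exact hhat.trans (by gcongr; exact le_max_right _ _)

/-- Conclusion `|D*_θ − D̂*_θ| ≤ (1 + κ)ζ` of the paper's Proposition 3 in deterministic
form. -/
theorem dual_gap_le_kappa_zeta {Θ : Type*} [Nonempty Θ] (m : ℕ) (hm : 1 ≤ m)
    (L Lhat : Θ → (Fin m → ℝ) → ℝ) (ζ : ℝ) (hζ : 0 ≤ ζ)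
    (μstar μhat : Fin m → ℝ) (hμstar : ∀ i, 0 ≤ μstar i) (hμhat : ∀ i, 0 ≤ μhat i)
    (θA θhatdag θdag θB : Θ)
    (h1 : ∀ θ, L θA μstar ≤ L θ μstar)
    (h2 : ∀ θ, Lhat θhatdag μstar ≤ Lhat θ μstar)
    (h3 : ∀ θ, L θdag μhat ≤ L θ μhat)
    (h4 : ∀ θ, Lhat θB μhat ≤ Lhat θ μhat)
    (h5 : L θdag μhat ≤ L θA μstar)
    (h6 : Lhat θhatdag μstar ≤ Lhat θB μhat)
    (h7 : ∀ θ, |L θ μstar - Lhat θ μstar| ≤ (1 + ∑ i, μstar i) * ζ)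
    (h8 : ∀ θ, |L θ μhat - Lhat θ μhat| ≤ (1 + ∑ i, μhat i) * ζ) :
    |L θA μstar - Lhat θB μhat| ≤ (1 + max (∑ i, μstar i) (∑ i, μhat i)) * ζ :=
  dual_gap_le_kappa_zeta_general m L Lhat ζ hζ μstar μhat θA θhatdag θdag θB h1 h4 h5 h6 h7 h8
end

section
/- Let H be a nonempty type, Q ⊆ H a nonempty subset, m ≥ 1, f : H → ℝ, g : Fin m → H → ℝ, c : Fin m → ℝ, and define L(φ, μ) := f φ + Σ_i μ i · (g i φ − c i). Let a, b ≥ 0 be real numbers. Assume: (i) approximation: for every φ ∈ H there exists ψ ∈ Q with f ψ ≤ f φ + a and g i ψ ≤ g i φ + b for all i; (ii) primal optimality: there is φ* ∈ H with g i φ* ≤ c i for all i, and set P := f φ*; (iii) original dual lower bound: there exists a nonnegative μ⁰ : Fin m → ℝ with L(φ, μ⁰) ≥ P for all φ ∈ H; (iv) perturbed strong duality: there exist a nonnegative μ̃ : Fin m → ℝ and P̃ ∈ ℝ such that f φ + Σ_i μ̃ i · (g i φ − c i + b) ≥ P̃ for all φ ∈ H, and for every nonnegative μ : Fin m → ℝ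 and every ε > 0 there exists φ ∈ H with f φ + Σ_i μ i · (g i φ − c i + b) ≤ P̃ + ε. Then, if D = sup over nonnegative μ of inf over ψ ∈ Q of L(ψ, μ) (assumed to exist as a real number), we have P ≤ D ≤ P + a + (Σ_i μ̃ i)·b. -/
/-- Abstract deterministic form of the paper's Proposition 2: the parameterized dual
value `D = sup_{μ ≥ 0} inf_{ψ ∈ Q} L(ψ, μ)` satisfies
`P ≤ D ≤ P + a + ‖μ̃‖₁ · b`. -/
theorem parameterized_dual_sandwich {H : Type*} [Nonempty H] (Q : Set H) (hQ : Q.Nonempty)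
    (m : ℕ) (hm : 1 ≤ m) (f : H → ℝ) (g : Fin m → H → ℝ) (c : Fin m → ℝ)
    (L : H → (Fin m → ℝ) → ℝ)
    (hLdef : ∀ φ μ, L φ μ = f φ + ∑ i, μ i * (g i φ - c i))
    (a b : ℝ) (ha : 0 ≤ a) (hb : 0 ≤ b)
    -- (i) approximation of H by Q
    (happrox : ∀ φ : H, ∃ ψ ∈ Q, f ψ ≤ f φ + a ∧ ∀ i, g i ψ ≤ g i φ + b)
    -- (ii) primal optimality
    (φstar : H) (hfeas : ∀ i, g i φstar ≤ c i) (P : ℝ) (hP : P = f φstar)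
    -- (iii) original dual lower bound
    (μ₀ : Fin m → ℝ) (hμ₀ : ∀ i, 0 ≤ μ₀ i) (hdual0 : ∀ φ : H, P ≤ L φ μ₀)
    -- (iv) perturbed strong duality
    (μt : Fin m → ℝ) (hμt : ∀ i, 0 ≤ μt i) (Pt : ℝ)
    (hpert1 : ∀ φ : H, Pt ≤ f φ + ∑ i, μt i * (g i φ - c i + b))
    (hpert2 : ∀ μ : Fin m → ℝ, (∀ i, 0 ≤ μ i) → ∀ ε > 0,
        ∃ φ : H, f φ + ∑ i, μ i * (g i φ - c i + b) ≤ Pt + ε)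
    -- D is the dual value over Q: the least upper bound of the dual function values
    (D : ℝ)
    (hD : IsLUB {d : ℝ | ∃ μ : Fin m → ℝ, (∀ i, 0 ≤ μ i) ∧
        IsGLB ((fun ψ => L ψ μ) '' Q) d} D) :
    P ≤ D ∧ D ≤ P + a + (∑ i, μt i) * b := by
  constructor
  · -- lower bound: the dual value at μ₀ is ≥ P and is in the set
    set S₀ : Set ℝ := (fun ψ => L ψ μ₀) '' Q with hS₀
    have hne : S₀.Nonempty := hQ.image _
    have hbdd : ∀ x ∈ S₀, P ≤ x := by
      rintro x ⟨ψ, hψ, rfl⟩; exact hdual0 ψ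
    have hglb : IsGLB S₀ (sInf S₀) :=
      Real.isGLB_sInf hne ⟨P, fun x hx => hbdd x hx⟩
    have hmem : sInf S₀ ∈ {d : ℝ | ∃ μ : Fin m → ℝ, (∀ i, 0 ≤ μ i) ∧
        IsGLB ((fun ψ => L ψ μ) '' Q) d} := ⟨μ₀, hμ₀, hglb⟩
    have h1 : P ≤ sInf S₀ := le_csInf hne hbdd
    exact h1.trans (hD.1 hmem)
  · -- upper bound
    have hPt : Pt ≤ P + (∑ i, μt i) * b := by
      have := hpert1 φstar
      have hsum : ∑ i, μt i * (g i φstar - c i + b) ≤ ∑ i, μt i * b := by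
        apply Finset.sum_le_sum
        intro i _
        have : g i φstar - c i + b ≤ b := by linarith [hfeas i]
        exact mul_le_mul_of_nonneg_left this (hμt i)
      rw [hP]
      calc Pt ≤ f φstar + ∑ i, μt i * (g i φstar - c i + b) := this
        _ ≤ f φstar + ∑ i, μt i * b := by linarith
        _ = f φstar + (∑ i, μt i) * b := by rw [Finset.sum_mul]
    apply hD.2
    rintro d ⟨μ, hμ, hglb⟩
    -- show d ≤ P + a + Σ μt b ; first d ≤ Pt + a
    have hd : d ≤ Pt + a := by
      have key : ∀ ε > (0:ℝ), d ≤ Pt + a + ε := by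
        intro ε hε
        obtain ⟨φ, hφ⟩ := hpert2 μ hμ ε hε
        obtain ⟨ψ, hψQ, hfψ, hgψ⟩ := happrox φ
        have hLψ : L ψ μ ≤ Pt + a + ε := by
          rw [hLdef]
          have hsum : ∑ i, μ i * (g i ψ - c i) ≤ ∑ i, μ i * (g i φ - c i + b) := by
            apply Finset.sum_le_sum
            intro i _
            exact mul_le_mul_of_nonneg_left (by linarith [hgψ i]) (hμ i)
          linarith
        have : d ≤ L ψ μ := hglb.1 ⟨ψ, hψQ, rfl⟩
        linarith
      by_contra hcon
      push_neg at hcon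
      have := key ((d - (Pt + a)) / 2) (by linarith)
      linarith
    linarith
end
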